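/- arXiv:1808.08884 — 2 statements merged into one kernel-verified Lean document; each statement's English description precedes it below -/
import Mathlib

section
/- Let ρ be an n×n density matrix with eigenvalue vector λ and diagonal-entry vector d, both sorted in descending order. If ρ ≤ r ρ_d for some r ≥ 1, then Σ_{i=1}^k λ_i ≤ r Σ_{i=1}^k d_i for every k = 1,…,n. Consequently C_{R,Δ}(ρ) = min{ r − 1 : ρ ≤ r ρ_d } ≥ max_{1≤k≤n} (Σ_{i=1}^k λ_i)/(Σ_{i=1}^k d_i) − 1, and more generally, if c is any probability vector with c ≺ λ, then C_{R,Δ}(ρ) ≥ max_{1≤k≤n} (Σ_{i=1}^k c_i^↓)/(Σ_{i=1}^k d_i) − 1. -/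
open Matrix Finset ComplexOrder

/-- The vector `x` sorted in descending order. -/
noncomputable def sortDesc {n : ℕ} (x : Fin n → ℝ) : Fin n → ℝ :=
  fun i => x (Tuple.sort x i.rev)

/-- The sum of the `k` largest entries of `x`. -/
noncomputable def topSum {n : ℕ} (x : Fin n → ℝ) (k : ℕ) : ℝ :=
  ∑ i ∈ Finset.univ.filter (fun i : Fin n => (i : ℕ) < k), sortDesc x i

/-- `Maj b a` means `b ≺ a`, i.e. `a` majorizes `b`. -/
def Maj {n : ℕ} (b a : Fin n → ℝ) : Prop := ∀ k : ℕ, topSum b k ≤ topSum a k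

/-- `p` is a probability vector. -/
def IsProbVec {n : ℕ} (p : Fin n → ℝ) : Prop := (∀ i, 0 ≤ p i) ∧ ∑ i, p i = 1

/-- Shannon entropy (base 2). -/
noncomputable def shannon {ι : Type*} [Fintype ι] (p : ι → ℝ) : ℝ :=
  -∑ i, p i * Real.logb 2 (p i)

/-- A von Neumann measurement: an orthonormal basis of `ℂⁿ`. -/
def IsONB {n : ℕ} (ψ : Fin n → (Fin n → ℂ)) : Prop :=
  ∀ i j, star (ψ i) ⬝ᵥ ψ j = if i = j then 1 else 0

/-- Outcome distribution of the measurement `ψ` on the state `ρ`. -/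
noncomputable def outcome {n : ℕ} (ρ : Matrix (Fin n) (Fin n) ℂ)
    (ψ : Fin n → (Fin n → ℂ)) : Fin n → ℝ :=
  fun i => (star (ψ i) ⬝ᵥ (ρ *ᵥ ψ i)).re

/-- Vector of diagonal entries of `ρ` (real parts). -/
noncomputable def diagVec {n : ℕ} (ρ : Matrix (Fin n) (Fin n) ℂ) : Fin n → ℝ :=
  fun i => (ρ i i).re

/-- `c` is the majorization join of `a` and `b`. -/
def IsMajJoin {n : ℕ} (a b c : Fin n → ℝ) : Prop :=
  IsProbVec c ∧ Maj a c ∧ Maj b c ∧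
    ∀ c', IsProbVec c' → Maj a c' → Maj b c' → Maj c c'

/-- `c` is the majorization meet of the set `X`. -/
def IsMajMeet {n : ℕ} (X : Set (Fin n → ℝ)) (c : Fin n → ℝ) : Prop :=
  IsProbVec c ∧ (∀ p ∈ X, Maj c p) ∧
    ∀ c', IsProbVec c' → (∀ p ∈ X, Maj c' p) → Maj c' c


/-- `C_{R,Δ}(ρ) = min { r − 1 : ρ ≤ r ρ_d }`, where `ρ_d` is the diagonal part of `ρ`. -/
noncomputable def CRobDelta {n : ℕ} (ρ : Matrix (Fin n) (Fin n) ℂ) : ℝ :=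
  sInf {x : ℝ | ∃ r : ℝ,
    ((r : ℂ) • Matrix.diagonal (fun i => ρ i i) - ρ).PosSemidef ∧ x = r - 1}

section Aux

variable {n : ℕ}

/-- The permutation sending `i` to the position of the `i`-th largest entry. -/
noncomputable def descEquiv (x : Fin n → ℝ) : Fin n ≃ Fin n :=
  Fin.revPerm.trans (Tuple.sort x)

lemma sortDesc_eq (x : Fin n → ℝ) (i : Fin n) :
    sortDesc x i = x (descEquiv x i) := rfl

lemma sortDesc_antitone (x : Fin n → ℝ) : Antitone (sortDesc x) := by
  intro i j hij
  exact Tuple.monotone_sort x (Fin.rev_le_rev.mpr hij)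

lemma filter_lt_card {k : ℕ} (hkn : k ≤ n) :
    (Finset.univ.filter (fun i : Fin n => (i : ℕ) < k)).card = k := by
  have : (Finset.univ.filter (fun i : Fin n => (i : ℕ) < k)) =
      Finset.map (Fin.castLEEmb hkn) Finset.univ := by
    ext j
    simp only [mem_filter, mem_univ, true_and, Finset.mem_map]
    constructor
    · intro h; exact ⟨⟨(j : ℕ), h⟩, Fin.ext rfl⟩
    · rintro ⟨i, rfl⟩; exact i.isLt
  rw [this, Finset.card_map, Finset.card_univ, Fintype.card_fin]

lemma topSum_eq_sum_map (x : Fin n → ℝ) (k : ℕ) :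
    topSum x k = ∑ j ∈ Finset.map (descEquiv x).toEmbedding
      (Finset.univ.filter (fun i : Fin n => (i : ℕ) < k)), x j := by
  rw [Finset.sum_map]; rfl

lemma topSum_zero (x : Fin n → ℝ) : topSum x 0 = 0 := by
  simp [topSum]

lemma topSum_min (x : Fin n → ℝ) (k : ℕ) : topSum x k = topSum x (min k n) := by
  unfold topSum
  congr 1
  ext i
  have := i.isLt
  simp only [mem_filter, mem_univ, true_and]
  omega

lemma topSum_pos {k : ℕ} (d : Fin n → ℝ) (hd : ∀ i, 0 < d i)
    (hk1 : 1 ≤ k) (hkn : k ≤ n) : 0 < topSum d k := by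
  refine Finset.sum_pos (fun i _ => hd _) ?_
  refine ⟨⟨0, by omega⟩, ?_⟩
  simp only [mem_filter, mem_univ, true_and]
  omega

lemma sum_mul_le_topSum (d t : Fin n → ℝ) (k : ℕ) (hk1 : 1 ≤ k) (hkn : k ≤ n)
    (ht0 : ∀ i, 0 ≤ t i) (ht1 : ∀ i, t i ≤ 1) (hts : ∑ i, t i = (k : ℝ)) :
    ∑ i, d i * t i ≤ topSum d k := by
  set T := Finset.map (descEquiv d).toEmbedding
      (Finset.univ.filter (fun i : Fin n => (i : ℕ) < k)) with hT
  have hkn' : k - 1 < n := by omega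
  set m := sortDesc d ⟨k - 1, hkn'⟩ with hm
  have hcard : T.card = k := by rw [hT, Finset.card_map, filter_lt_card hkn]
  have hmemT : ∀ j : Fin n, j ∈ T ↔ (((descEquiv d).symm j : ℕ) < k) := by
    intro j
    rw [hT, Finset.mem_map_equiv]
    simp
  have hin : ∀ j ∈ T, m ≤ d j := by
    intro j hj
    rw [hmemT] at hj
    have h1 : sortDesc d ((descEquiv d).symm j) = d j := by
      rw [sortDesc_eq, Equiv.apply_symm_apply]
    rw [← h1]
    exact sortDesc_antitone d (by rw [Fin.le_def]; simp only; omega)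
  have hout : ∀ j ∉ T, d j ≤ m := by
    intro j hj
    rw [hmemT] at hj
    push_neg at hj
    have h1 : sortDesc d ((descEquiv d).symm j) = d j := by
      rw [sortDesc_eq, Equiv.apply_symm_apply]
    rw [← h1]
    exact sortDesc_antitone d (by rw [Fin.le_def]; simp only; omega)
  have h1 : ∑ i ∈ Tᶜ, d i * t i ≤ m * ∑ i ∈ Tᶜ, t i := by
    rw [Finset.mul_sum]
    refine Finset.sum_le_sum fun i hi => ?_
    exact mul_le_mul_of_nonneg_right (hout i (by simpa using hi)) (ht0 i)
  have h2 : m * ∑ i ∈ T, (1 - t i) ≤ ∑ i ∈ T, d i * (1 - t i) := by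
    rw [Finset.mul_sum]
    refine Finset.sum_le_sum fun i hi => ?_
    exact mul_le_mul_of_nonneg_right (hin i hi) (by linarith [ht1 i])
  have hsplit : ∑ i ∈ T, t i + ∑ i ∈ Tᶜ, t i = (k : ℝ) := by
    rw [Finset.sum_add_sum_compl, hts]
  have h3 : ∑ i ∈ T, (1 - t i) = (k : ℝ) - ∑ i ∈ T, t i := by
    rw [Finset.sum_sub_distrib, Finset.sum_const, hcard]; simp
  have h4 : ∑ i ∈ T, d i * t i + ∑ i ∈ T, d i * (1 - t i) = ∑ i ∈ T, d i := by
    rw [← Finset.sum_add_distrib]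
    exact Finset.sum_congr rfl fun i _ => by ring
  have h5 : ∑ i, d i * t i = ∑ i ∈ T, d i * t i + ∑ i ∈ Tᶜ, d i * t i := by
    rw [Finset.sum_add_sum_compl]
  have h6 : topSum d k = ∑ j ∈ T, d j := topSum_eq_sum_map d k
  have h7 : ∑ i ∈ Tᶜ, t i = ∑ i ∈ T, (1 - t i) := by rw [h3]; linarith
  rw [h5, h6]
  calc ∑ i ∈ T, d i * t i + ∑ i ∈ Tᶜ, d i * t i
      ≤ ∑ i ∈ T, d i * t i + m * ∑ i ∈ Tᶜ, t i := by linarith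
    _ = ∑ i ∈ T, d i * t i + m * ∑ i ∈ T, (1 - t i) := by rw [h7]
    _ ≤ ∑ i ∈ T, d i * t i + ∑ i ∈ T, d i * (1 - t i) := by linarith
    _ = ∑ i ∈ T, d i := h4

variable (ρ : Matrix (Fin n) (Fin n) ℂ) (hρ : ρ.PosSemidef)

lemma row_normSq_sum (i : Fin n) :
    ∑ j, Complex.normSq (hρ.isHermitian.eigenvectorBasis j i) = 1 := by
  set U := (hρ.isHermitian.eigenvectorUnitary : Matrix (Fin n) (Fin n) ℂ)
  have hU : U * star U = 1 := (Matrix.mem_unitaryGroup_iff).mp hρ.isHermitian.eigenvectorUnitary.2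
  have h1 : (U * star U) i i = 1 := by rw [hU]; simp
  rw [Matrix.mul_apply] at h1
  have h2 : ∀ j, U i j * star U j i = (Complex.normSq (U i j) : ℂ) := by
    intro j
    rw [Matrix.star_apply, ← Complex.mul_conj]
    rfl
  simp only [h2] at h1
  rw [← Complex.ofReal_sum] at h1
  have h3 := congrArg Complex.re h1
  simp only [Complex.ofReal_re, Complex.one_re] at h3
  have h4 : ∀ j, Complex.normSq (hρ.isHermitian.eigenvectorBasis j i)
      = Complex.normSq (U i j) := by
    intro j; simp [U, Matrix.IsHermitian.eigenvectorUnitary_apply]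
  simpa [h4] using h3

lemma col_normSq_sum (j : Fin n) :
    ∑ i, Complex.normSq (hρ.isHermitian.eigenvectorBasis j i) = 1 := by
  set U := (hρ.isHermitian.eigenvectorUnitary : Matrix (Fin n) (Fin n) ℂ)
  have hU : star U * U = 1 := (Matrix.mem_unitaryGroup_iff').mp hρ.isHermitian.eigenvectorUnitary.2
  have h1 : (star U * U) j j = 1 := by rw [hU]; simp
  rw [Matrix.mul_apply] at h1
  have h2 : ∀ i, star U j i * U i j = (Complex.normSq (U i j) : ℂ) := by
    intro i
    rw [Matrix.star_apply, Complex.normSq_eq_conj_mul_self]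
    rfl
  simp only [h2] at h1
  rw [← Complex.ofReal_sum] at h1
  have h3 := congrArg Complex.re h1
  simp only [Complex.ofReal_re, Complex.one_re] at h3
  have h4 : ∀ i, Complex.normSq (hρ.isHermitian.eigenvectorBasis j i)
      = Complex.normSq (U i j) := by
    intro i; simp [U, Matrix.IsHermitian.eigenvectorUnitary_apply]
  simpa [h4] using h3

lemma single_eig_ineq (r : ℝ)
    (hr : ((r : ℂ) • Matrix.diagonal (fun i => ρ i i) - ρ).PosSemidef) (j : Fin n) :
    hρ.isHermitian.eigenvalues j
      ≤ r * ∑ i, (ρ i i).re * Complex.normSq (hρ.isHermitian.eigenvectorBasis j i) := by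
  set v : Fin n → ℂ := ⇑(hρ.isHermitian.eigenvectorBasis j) with hv
  have h0 := hr.re_dotProduct_nonneg v
  have hdiag : (star v ⬝ᵥ (Matrix.diagonal (fun i => ρ i i) *ᵥ v)).re
      = ∑ i, (ρ i i).re * Complex.normSq (v i) := by
    simp only [dotProduct, Matrix.mulVec_diagonal, Complex.re_sum]
    refine Finset.sum_congr rfl fun i _ => ?_
    have h : star v i * (ρ i i * v i) = ρ i i * (Complex.normSq (v i) : ℂ) := by
      rw [Complex.normSq_eq_conj_mul_self]
      simp [Pi.star_apply, RCLike.star_def]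
      ring
    rw [h, Complex.mul_re]
    simp
  have heig : hρ.isHermitian.eigenvalues j = (star v ⬝ᵥ (ρ *ᵥ v)).re := by
    simpa using hρ.isHermitian.eigenvalues_eq j
  rw [Matrix.sub_mulVec, Matrix.smul_mulVec, dotProduct_sub, dotProduct_smul] at h0
  simp only [RCLike.re_to_complex, Complex.sub_re, smul_eq_mul] at h0
  have hmul : ((r : ℂ) * (star v ⬝ᵥ (Matrix.diagonal (fun i => ρ i i) *ᵥ v))).re
      = r * (star v ⬝ᵥ (Matrix.diagonal (fun i => ρ i i) *ᵥ v)).re := by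
    rw [Complex.mul_re]; simp
  rw [hmul, hdiag] at h0
  have hco : ∀ i, hρ.isHermitian.eigenvectorBasis j i = v i := fun _ => rfl
  rw [heig]
  linarith

lemma key_ineq (r : ℝ) (hr0 : 0 ≤ r)
    (hr : ((r : ℂ) • Matrix.diagonal (fun i => ρ i i) - ρ).PosSemidef)
    (k : ℕ) (hk1 : 1 ≤ k) (hkn : k ≤ n) :
    topSum hρ.isHermitian.eigenvalues k ≤ r * topSum (diagVec ρ) k := by
  set lam := hρ.isHermitian.eigenvalues with hlam
  set S := Finset.map (descEquiv lam).toEmbedding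
      (Finset.univ.filter (fun i : Fin n => (i : ℕ) < k)) with hS
  set t : Fin n → ℝ :=
    fun i => ∑ j ∈ S, Complex.normSq (hρ.isHermitian.eigenvectorBasis j i) with ht
  have hScard : S.card = k := by rw [hS, Finset.card_map, filter_lt_card hkn]
  have ht0 : ∀ i, 0 ≤ t i := fun i => Finset.sum_nonneg fun j _ => Complex.normSq_nonneg _
  have ht1 : ∀ i, t i ≤ 1 := by
    intro i
    calc t i ≤ ∑ j, Complex.normSq (hρ.isHermitian.eigenvectorBasis j i) :=
          Finset.sum_le_sum_of_subset_of_nonneg (Finset.subset_univ S)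
            (fun j _ _ => Complex.normSq_nonneg _)
      _ = 1 := row_normSq_sum ρ hρ i
  have hts : ∑ i, t i = (k : ℝ) := by
    rw [ht]
    rw [Finset.sum_comm]
    rw [Finset.sum_congr rfl (fun j _ => col_normSq_sum ρ hρ j)]
    simp [hScard]
  have hsum : ∑ j ∈ S, lam j ≤ r * ∑ i, diagVec ρ i * t i := by
    calc ∑ j ∈ S, lam j
        ≤ ∑ j ∈ S, r * ∑ i, (ρ i i).re
            * Complex.normSq (hρ.isHermitian.eigenvectorBasis j i) :=
          Finset.sum_le_sum fun j _ => single_eig_ineq ρ hρ r hr j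
      _ = r * ∑ i, diagVec ρ i * t i := by
          rw [← Finset.mul_sum]
          congr 1
          rw [Finset.sum_comm]
          refine Finset.sum_congr rfl fun i _ => ?_
          rw [ht, Finset.mul_sum]
          simp [diagVec]
  have hfinal := sum_mul_le_topSum (diagVec ρ) t k hk1 hkn ht0 ht1 hts
  have htop : topSum lam k = ∑ j ∈ S, lam j := topSum_eq_sum_map lam k
  rw [htop]
  calc ∑ j ∈ S, lam j ≤ r * ∑ i, diagVec ρ i * t i := hsum
    _ ≤ r * topSum (diagVec ρ) k := mul_le_mul_of_nonneg_left hfinal hr0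

end Aux

section Main

variable {n : ℕ} (ρ : Matrix (Fin n) (Fin n) ℂ)

lemma diag_real (hρ : ρ.PosSemidef) (i : Fin n) : ρ i i = ((ρ i i).re : ℂ) := by
  have h := congrFun (congrFun hρ.isHermitian i) i
  rw [Matrix.conjTranspose_apply] at h
  exact (Complex.conj_eq_iff_re.mp h).symm

lemma sum_diag_re (htr : ρ.trace = 1) : ∑ i, (ρ i i).re = 1 := by
  have h : (ρ.trace).re = 1 := by rw [htr]; rfl
  simpa [Matrix.trace, Matrix.diag, Complex.re_sum] using h

lemma sum_eig (hρ : ρ.PosSemidef) (htr : ρ.trace = 1) :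
    ∑ i, hρ.isHermitian.eigenvalues i = 1 := by
  have h1 : ρ.trace = ∑ i, (hρ.isHermitian.eigenvalues i : ℂ) := by
    conv_lhs => rw [hρ.isHermitian.spectral_theorem, Unitary.conjStarAlgAut_apply]
    rw [Matrix.trace_mul_cycle,
      (Matrix.mem_unitaryGroup_iff').mp hρ.isHermitian.eigenvectorUnitary.2, one_mul,
      Matrix.trace_diagonal]
    rfl
  rw [htr, ← Complex.ofReal_sum] at h1
  exact_mod_cast h1.symm

lemma eig_le_one (hρ : ρ.PosSemidef) (htr : ρ.trace = 1) (j : Fin n) :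
    hρ.isHermitian.eigenvalues j ≤ 1 := by
  have h := sum_eig ρ hρ htr
  have h2 := Finset.single_le_sum (f := hρ.isHermitian.eigenvalues)
    (fun i _ => hρ.eigenvalues_nonneg i) (mem_univ j)
  linarith

lemma one_sub_psd (hρ : ρ.PosSemidef) (htr : ρ.trace = 1) :
    ((1 : Matrix (Fin n) (Fin n) ℂ) - ρ).PosSemidef := by
  set U := (hρ.isHermitian.eigenvectorUnitary : Matrix (Fin n) (Fin n) ℂ) with hUdef
  have hU1 : U * star U = 1 := (Matrix.mem_unitaryGroup_iff).mp hρ.isHermitian.eigenvectorUnitary.2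
  have key : (1 : Matrix (Fin n) (Fin n) ℂ) - ρ
      = U * Matrix.diagonal (fun i => 1 - (hρ.isHermitian.eigenvalues i : ℂ)) * star U := by
    have hd : Matrix.diagonal (fun i => 1 - (hρ.isHermitian.eigenvalues i : ℂ))
        = 1 - Matrix.diagonal (RCLike.ofReal ∘ hρ.isHermitian.eigenvalues) := by
      rw [← Matrix.diagonal_one, Matrix.diagonal_sub]
      rfl
    rw [hd, Matrix.mul_sub, Matrix.mul_one, Matrix.sub_mul, hU1]
    conv_lhs => rw [hρ.isHermitian.spectral_theorem, Unitary.conjStarAlgAut_apply]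
  rw [key, Matrix.star_eq_conjTranspose]
  refine Matrix.PosSemidef.mul_mul_conjTranspose_same ?_ U
  refine Matrix.posSemidef_diagonal_iff.mpr fun i => ?_
  have h2 : (1 : ℂ) - (hρ.isHermitian.eigenvalues i : ℂ)
      = (((1 - hρ.isHermitian.eigenvalues i : ℝ)) : ℂ) := by push_cast; ring
  rw [h2]
  rw [Complex.zero_le_real]
  linarith [eig_le_one ρ hρ htr i]

lemma exists_psd (hρ : ρ.PosSemidef) (htr : ρ.trace = 1)
    (hd : ∀ i, 0 < (ρ i i).re) (hn : 0 < n) :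
    ∃ r : ℝ, ((r : ℂ) • Matrix.diagonal (fun i => ρ i i) - ρ).PosSemidef := by
  have hne : (univ : Finset (Fin n)).Nonempty := ⟨⟨0, hn⟩, mem_univ _⟩
  set dmin := univ.inf' hne (fun i => (ρ i i).re) with hdm
  have hdminpos : 0 < dmin := by
    rw [hdm, Finset.lt_inf'_iff]
    exact fun i _ => hd i
  refine ⟨1 / dmin, ?_⟩
  have h1 : Matrix.diagonal (fun i => ((1/dmin : ℝ) : ℂ) * ρ i i - 1)
      = ((1/dmin : ℝ) : ℂ) • Matrix.diagonal (fun i => ρ i i) - 1 := by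
    rw [← Matrix.diagonal_one, ← Matrix.diagonal_smul, Matrix.diagonal_sub]
    rfl
  have hsplit : ((1/dmin : ℝ) : ℂ) • Matrix.diagonal (fun i => ρ i i) - ρ
      = Matrix.diagonal (fun i => ((1/dmin : ℝ) : ℂ) * ρ i i - 1) + (1 - ρ) := by
    rw [h1]; abel
  rw [hsplit]
  refine Matrix.PosSemidef.add ?_ (one_sub_psd ρ hρ htr)
  refine Matrix.posSemidef_diagonal_iff.mpr fun i => ?_
  have h2 : ((1/dmin : ℝ) : ℂ) * ρ i i - 1 = (((1/dmin) * (ρ i i).re - 1 : ℝ) : ℂ) := by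
    conv_lhs => rw [diag_real ρ hρ i]
    push_cast; ring
  rw [h2, Complex.zero_le_real]
  have h3 : dmin ≤ (ρ i i).re := Finset.inf'_le _ (mem_univ i)
  have h4 : 1 ≤ (ρ i i).re / dmin := (one_le_div hdminpos).mpr h3
  have h5 : 1/dmin * (ρ i i).re = (ρ i i).re / dmin := by ring
  linarith

lemma psd_imp_r_ge_one (htr : ρ.trace = 1) (r : ℝ)
    (hr : ((r : ℂ) • Matrix.diagonal (fun i => ρ i i) - ρ).PosSemidef) : 1 ≤ r := by
  set M := (r : ℂ) • Matrix.diagonal (fun i => ρ i i) - ρ with hM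
  have hMval : ∀ i, star (Pi.single i (1:ℂ)) ⬝ᵥ (M *ᵥ Pi.single i 1) = M i i := by
    intro i
    simp [dotProduct, Matrix.mulVec, Pi.single_apply, apply_ite, Finset.sum_ite_eq]
  have hpos : ∀ i, 0 ≤ (M i i).re := by
    intro i
    have h := hr.re_dotProduct_nonneg (Pi.single i (1:ℂ))
    rw [RCLike.re_to_complex] at h
    rwa [hMval i] at h
  have hMre : ∀ i, (M i i).re = r * (ρ i i).re - (ρ i i).re := by
    intro i
    rw [hM]
    simp [Matrix.sub_apply, Matrix.smul_apply, Matrix.diagonal_apply_eq, smul_eq_mul,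
      Complex.sub_re, Complex.mul_re]
  have hsum : 0 ≤ ∑ i, (M i i).re := Finset.sum_nonneg fun i _ => hpos i
  have heq : ∑ i, (M i i).re = r - 1 := by
    rw [Finset.sum_congr rfl fun i _ => hMre i, Finset.sum_sub_distrib, ← Finset.mul_sum,
      sum_diag_re ρ htr]
    ring
  linarith [heq ▸ hsum]

end Main

/-- If `ρ ≤ r ρ_d`, then the partial sums of the sorted eigenvalues are
bounded by `r` times the partial sums of the sorted diagonal; consequently
`C_{R,Δ}(ρ) ≥ max_k (∑_{i≤k} λᵢ)/(∑_{i≤k} dᵢ) − 1`, and more generally the same bound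
holds with `λ` replaced by any probability vector `c ≺ λ`. -/
theorem stmt18 {n : ℕ} (ρ : Matrix (Fin n) (Fin n) ℂ)
    (hρ : ρ.PosSemidef) (htr : ρ.trace = 1)
    (hd : ∀ i, 0 < (ρ i i).re) :
    (∀ r : ℝ, 1 ≤ r →
      ((r : ℂ) • Matrix.diagonal (fun i => ρ i i) - ρ).PosSemidef →
      ∀ k : ℕ, topSum hρ.isHermitian.eigenvalues k ≤ r * topSum (diagVec ρ) k) ∧
    (∀ k : ℕ, 1 ≤ k → k ≤ n →
      topSum hρ.isHermitian.eigenvalues k / topSum (diagVec ρ) k - 1 ≤ CRobDelta ρ) ∧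
    (∀ c : Fin n → ℝ, IsProbVec c → Maj c hρ.isHermitian.eigenvalues →
      ∀ k : ℕ, 1 ≤ k → k ≤ n →
        topSum c k / topSum (diagVec ρ) k - 1 ≤ CRobDelta ρ) := by
  have part1 : ∀ r : ℝ, 1 ≤ r →
      ((r : ℂ) • Matrix.diagonal (fun i => ρ i i) - ρ).PosSemidef →
      ∀ k : ℕ, topSum hρ.isHermitian.eigenvalues k ≤ r * topSum (diagVec ρ) k := by
    intro r hr1 hpsd k
    rcases Nat.eq_zero_or_pos k with hk | hk
    · subst hk
      rw [topSum_zero, topSum_zero, mul_zero]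
    · rw [topSum_min _ k, topSum_min (diagVec ρ) k]
      rcases Nat.eq_zero_or_pos (min k n) with h0 | h0
      · rw [h0, topSum_zero, topSum_zero, mul_zero]
      · exact key_ineq ρ hρ r (by linarith) hpsd (min k n) h0 (min_le_right _ _)
  have part2 : ∀ k : ℕ, 1 ≤ k → k ≤ n →
      topSum hρ.isHermitian.eigenvalues k / topSum (diagVec ρ) k - 1 ≤ CRobDelta ρ := by
    intro k hk1 hkn
    have hn : 0 < n := lt_of_lt_of_le hk1 hkn
    obtain ⟨r0, hr0⟩ := exists_psd ρ hρ htr hd hn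
    refine le_csInf ⟨r0 - 1, r0, hr0, rfl⟩ ?_
    rintro x ⟨r, hpsd, rfl⟩
    have hr1 : 1 ≤ r := psd_imp_r_ge_one ρ htr r hpsd
    have hkey := key_ineq ρ hρ r (by linarith) hpsd k hk1 hkn
    have hdpos : 0 < topSum (diagVec ρ) k := topSum_pos (diagVec ρ) hd hk1 hkn
    have hdiv : topSum hρ.isHermitian.eigenvalues k / topSum (diagVec ρ) k ≤ r :=
      (div_le_iff₀ hdpos).mpr (by linarith)
    linarith
  refine ⟨part1, part2, ?_⟩
  intro c hc hmaj k hk1 hkn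
  have h1 := hmaj k
  have hdpos : 0 < topSum (diagVec ρ) k := topSum_pos (diagVec ρ) hd hk1 hkn
  have h2 := part2 k hk1 hkn
  have hdiv : topSum c k / topSum (diagVec ρ) k
      ≤ topSum hρ.isHermitian.eigenvalues k / topSum (diagVec ρ) k := by
    gcongr
  linarith
end

section
/- Let X be a nonempty set of probability vectors in ℝⁿ that is invariant under a group G of permutations of the coordinates and closed under taking the G-average p̄ = (1/|G|) Σ_{π∈G} π(p) (e.g., X convex and G-invariant). Let S be the set of probability vectors fixed by every π ∈ G. Then the majorization meet over X equals the majorization meet over its symmetric elements: ⋀_{p∈X} p = ⋀_{p∈X∩S} p. In particular, this uses that the G-average satisfies p̄ ≺ p for every p. -/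
open Matrix Finset ComplexOrder

lemma strictMono_le_fin {m n : ℕ} {f : Fin m → Fin n} (hf : StrictMono f) :
    ∀ (jv : ℕ) (hj : jv < m), jv ≤ (f ⟨jv, hj⟩ : ℕ) := by
  intro jv
  induction jv with
  | zero => intro _; exact Nat.zero_le _
  | succ i ih =>
      intro hj
      have hi : i < m := by omega
      have h1 := ih hi
      have h2 : f ⟨i, hi⟩ < f ⟨i + 1, hj⟩ := hf (by simp [Fin.lt_def])
      rw [Fin.lt_def] at h2
      omega

lemma strictMono_upper {m n : ℕ} {f : Fin m → Fin n} (hf : StrictMono f) (j : Fin m) :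
    (f j : ℕ) ≤ n - m + j := by
  have hrev : StrictMono (fun j : Fin m => (f j.rev).rev) := by
    intro a b hab
    have : f b.rev < f a.rev := hf (by rw [Fin.lt_def, Fin.val_rev, Fin.val_rev]; omega)
    rw [Fin.lt_def, Fin.val_rev, Fin.val_rev]
    rw [Fin.lt_def] at this
    have := (f a.rev).isLt
    omega
  have h := strictMono_le_fin hrev j.rev j.rev.isLt
  simp only [Fin.eta] at h
  rw [Fin.rev_rev] at h
  rw [Fin.val_rev, Fin.val_rev] at h
  have h3 := (f j).isLt
  have h4 := j.isLt
  omega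

def eFin {n : ℕ} (k : ℕ) : Fin (min k n) → Fin n :=
  fun j => ⟨(j : ℕ), lt_of_lt_of_le j.isLt (min_le_right k n)⟩

lemma eFin_inj {n k : ℕ} : Function.Injective (eFin (n := n) k) := by
  intro a b h
  have h2 := congrArg Fin.val h
  simp only [eFin] at h2
  exact Fin.ext h2

lemma B_eq_image {n k : ℕ} :
    Finset.univ.filter (fun i : Fin n => (i : ℕ) < k) =
      Finset.image (eFin k) Finset.univ := by
  ext i
  simp only [mem_filter, mem_univ, true_and, mem_image]
  constructor
  · intro hi
    exact ⟨⟨(i : ℕ), lt_min hi i.isLt⟩, by simp [eFin]⟩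
  · rintro ⟨j, rfl⟩
    exact lt_of_lt_of_le j.isLt (min_le_left k n)

lemma topSum_eq_sum {n : ℕ} (x : Fin n → ℝ) (k : ℕ) :
    topSum x k = ∑ j : Fin (min k n), (x ∘ Tuple.sort x) (eFin k j).rev := by
  rw [topSum, B_eq_image, Finset.sum_image (fun a _ b _ h => eFin_inj h)]
  rfl

lemma sum_le_topSum {n : ℕ} (x : Fin n → ℝ) (k : ℕ) (T : Finset (Fin n))
    (hT : T.card = min k n) : ∑ i ∈ T, x i ≤ topSum x k := by
  set σ := Tuple.sort x with hσ
  set y : Fin n → ℝ := x ∘ σ with hy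
  have hymono : Monotone y := Tuple.monotone_sort x
  have hmn : min k n ≤ n := min_le_right k n
  set T' : Finset (Fin n) := T.image σ.symm with hT'def
  have hT' : T'.card = min k n := by
    rw [hT'def, Finset.card_image_of_injective _ σ.symm.injective, hT]
  have hsum1 : ∑ i ∈ T, x i = ∑ i ∈ T', y i := by
    rw [hT'def, Finset.sum_image (fun a _ b _ h => σ.symm.injective h)]
    simp [hy]
  set f := T'.orderEmbOfFin hT' with hf
  have himg : Finset.image (f : Fin (min k n) → Fin n) Finset.univ = T' := by
    apply Finset.coe_injective
    rw [Finset.coe_image, Finset.coe_univ, Set.image_univ]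
    exact Finset.range_orderEmbOfFin T' hT'
  have hsum2 : ∑ i ∈ T', y i = ∑ j : Fin (min k n), y (f j) := by
    rw [← himg, Finset.sum_image (fun a _ b _ h => f.injective h)]
  rw [hsum1, hsum2, topSum_eq_sum]
  calc ∑ j : Fin (min k n), y (f j)
      ≤ ∑ j : Fin (min k n), y (eFin k j.rev).rev := by
        apply Finset.sum_le_sum
        intro j _
        apply hymono
        rw [Fin.le_def, Fin.val_rev]
        have h1 : (f j : ℕ) ≤ n - min k n + j := strictMono_upper f.strictMono j
        have h2 := j.isLt
        simp only [eFin, Fin.val_rev]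
        omega
    _ = ∑ j : Fin (min k n), y (eFin k j).rev :=
        Equiv.sum_comp Fin.revPerm (fun j => y (eFin k j).rev)
    _ = ∑ j : Fin (min k n), (x ∘ Tuple.sort x) (eFin k j).rev := rfl

lemma topSum_exists_set {n : ℕ} (x : Fin n → ℝ) (k : ℕ) :
    ∃ T : Finset (Fin n), T.card = min k n ∧ topSum x k = ∑ i ∈ T, x i := by
  have hinj : Function.Injective (fun j : Fin (min k n) => Tuple.sort x (eFin k j).rev) := by
    intro a b h
    exact eFin_inj (Fin.rev_injective ((Tuple.sort x).injective h))
  refine ⟨Finset.image (fun j : Fin (min k n) => Tuple.sort x (eFin k j).rev) Finset.univ,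
    ?_, ?_⟩
  · rw [Finset.card_image_of_injective _ hinj, Finset.card_univ, Fintype.card_fin]
  · rw [Finset.sum_image (fun a _ b _ h => hinj h), topSum_eq_sum]
    rfl

lemma topSum_avg_le {n : ℕ} (G : Finset (Equiv.Perm (Fin n))) (hGne : G.Nonempty)
    (p : Fin n → ℝ) (k : ℕ) :
    topSum (fun i => (∑ π ∈ G, p (π i)) / (G.card : ℝ)) k ≤ topSum p k := by
  obtain ⟨T, hTcard, hTeq⟩ :=
    topSum_exists_set (fun i => (∑ π ∈ G, p (π i)) / (G.card : ℝ)) k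
  rw [hTeq]
  have hc : (0 : ℝ) < G.card := by exact_mod_cast Finset.card_pos.mpr hGne
  have hswap : ∑ i ∈ T, (∑ π ∈ G, p (π i)) / (G.card : ℝ)
      = (∑ π ∈ G, ∑ i ∈ T, p (π i)) / (G.card : ℝ) := by
    rw [← Finset.sum_div, Finset.sum_comm]
  rw [hswap, div_le_iff₀ hc]
  calc ∑ π ∈ G, ∑ i ∈ T, p (π i) ≤ ∑ _π ∈ G, topSum p k := by
        apply Finset.sum_le_sum
        intro π _
        have himg : ∑ i ∈ T, p (π i) = ∑ i ∈ T.image π, p i := by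
          rw [Finset.sum_image (fun a _ b _ h => π.injective h)]
        rw [himg]
        exact sum_le_topSum p k _
          (by rw [Finset.card_image_of_injective _ π.injective, hTcard])
    _ = topSum p k * G.card := by rw [Finset.sum_const, nsmul_eq_mul, mul_comm]

/-- If `X` is a nonempty `G`-invariant set of probability vectors closed
under the `G`-average, then the majorization meet over `X` equals the majorization
meet over its `G`-symmetric elements; in particular the `G`-average of any probability
vector `p` is majorized by `p`. -/
theorem stmt19 {n : ℕ} (G : Finset (Equiv.Perm (Fin n)))
    (hG1 : (1 : Equiv.Perm (Fin n)) ∈ G)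
    (hGmul : ∀ π ∈ G, ∀ σ ∈ G, π * σ ∈ G) (hGinv : ∀ π ∈ G, π⁻¹ ∈ G)
    (X : Set (Fin n → ℝ)) (hXne : X.Nonempty) (hXp : ∀ p ∈ X, IsProbVec p)
    (hXinv : ∀ p ∈ X, ∀ π ∈ G, (fun i => p (π i)) ∈ X)
    (hXavg : ∀ p ∈ X, (fun i => (∑ π ∈ G, p (π i)) / (G.card : ℝ)) ∈ X) :
    (∀ p : Fin n → ℝ, IsProbVec p →
      Maj (fun i => (∑ π ∈ G, p (π i)) / (G.card : ℝ)) p) ∧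
    (∀ c : Fin n → ℝ, IsMajMeet X c ↔
      IsMajMeet (X ∩ {p | ∀ π ∈ G, (fun i => p (π i)) = p}) c) := by
  have hGne : G.Nonempty := ⟨1, hG1⟩
  have part1 : ∀ p : Fin n → ℝ, Maj (fun i => (∑ π ∈ G, p (π i)) / (G.card : ℝ)) p :=
    fun p k => topSum_avg_le G hGne p k
  have htrans : ∀ a b c : Fin n → ℝ, Maj a b → Maj b c → Maj a c :=
    fun a b c h1 h2 k => le_trans (h1 k) (h2 k)
  have havgsym : ∀ p : Fin n → ℝ, ∀ σ ∈ G,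
      (fun i => (∑ π ∈ G, p (π (σ i))) / (G.card : ℝ))
        = fun i => (∑ π ∈ G, p (π i)) / (G.card : ℝ) := by
    intro p σ hσ
    funext i
    congr 1
    refine Finset.sum_nbij' (i := fun π => π * σ) (j := fun τ => τ * σ⁻¹)
      (fun π hπ => hGmul π hπ σ hσ) (fun τ hτ => hGmul τ hτ σ⁻¹ (hGinv σ hσ))
      (fun π _ => by group) (fun τ _ => by group) (fun π _ => rfl)
  have hbarX : ∀ p ∈ X, (fun i => (∑ π ∈ G, p (π i)) / (G.card : ℝ)) ∈
      X ∩ {p | ∀ π ∈ G, (fun i => p (π i)) = p} := by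
    intro p hp
    refine ⟨hXavg p hp, ?_⟩
    intro σ hσ
    exact havgsym p σ hσ
  constructor
  · intro p _
    exact part1 p
  · intro c
    constructor
    · rintro ⟨hcp, hlb, hgr⟩
      refine ⟨hcp, fun p hp => hlb p hp.1, fun c' hc' hlb' => hgr c' hc' ?_⟩
      intro p hp
      exact htrans _ _ _ (hlb' _ (hbarX p hp)) (part1 p)
    · rintro ⟨hcp, hlb, hgr⟩
      exact ⟨hcp, fun p hp => htrans _ _ _ (hlb _ (hbarX p hp)) (part1 p),
        fun c' hc' hlb' => hgr c' hc' fun p hp => hlb' p hp.1⟩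
end
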